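/- For every Borel set B ⊆ ℝ, the map f ↦ λ( t ∈ [0,∞) : f(t) ∈ B ) from D([0,∞),ℝ) to [0,∞] is measurable with respect to the Borel σ-algebra of the Skorokhod J1 topology, where λ is Lebesgue measure on [0,∞). -/

import Mathlib

/-!
The occupation time of `f` is the Lebesgue measure of the `f`-section of
`{(f, t) | 0 ≤ t ∧ f t ∈ B} ⊆ D × ℝ`, so it suffices that `(f, t) ↦ f t` be jointly measurable
on `D × [0, ∞)`. By right continuity `f t` is the limit of `f` along a countable grid approaching
`t` from the right, which reduces joint measurability to measurability of each evaluation
`f ↦ f q`, `q ≥ 0`. In turn `f q` is the limit of the averages of `f` over `[q, q + 1 / (n + 1)]`,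
and these windowed integrals are `J1`-continuous: on `[0, b)` a càdlàg function oscillates little
on each piece of a suitable finite partition, and a time change close to the identity keeps every
point away from the breakpoints in its own piece.
-/

open MeasureTheory Set Filter Topology

noncomputable section

/-- `f` is càdlàg on `[0,∞)`: right-continuous at every `t ≥ 0` and with left limits
at every `t > 0`. -/
def IsCadlag (f : ℝ → ℝ) : Prop :=
  (∀ t : ℝ, 0 ≤ t → Tendsto f (𝓝[≥] t) (𝓝 (f t))) ∧
  (∀ t : ℝ, 0 < t → ∃ L : ℝ, Tendsto f (𝓝[<] t) (𝓝 L))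

/-- A Skorokhod time change on `[0,T]`: a strictly increasing continuous bijection of
`[0,T]` onto itself. -/
def IsTimeChange (T : ℝ) (γ : ℝ → ℝ) : Prop :=
  ContinuousOn γ (Icc 0 T) ∧ StrictMonoOn γ (Icc 0 T) ∧ γ 0 = 0 ∧ γ T = T

/-- The Skorokhod `J1` metric on `D([0,T],ℝ)`:
`d_{J1,T}(f,g) = inf_γ max( sup_{t∈[0,T]} |γ(t)−t| , sup_{t∈[0,T]} |f(γ(t))−g(t)| )`. -/
noncomputable def dJ1T (T : ℝ) (f g : ℝ → ℝ) : ℝ :=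
  sInf {r : ℝ | 0 ≤ r ∧ ∃ γ : ℝ → ℝ, IsTimeChange T γ ∧
    (∀ t ∈ Icc (0:ℝ) T, |γ t - t| ≤ r) ∧ (∀ t ∈ Icc (0:ℝ) T, |f (γ t) - g t| ≤ r)}

/-- The smoothed restriction `f|_m` of `f` to `[0,m]`. -/
noncomputable def restrictD (m : ℝ) (f : ℝ → ℝ) : ℝ → ℝ :=
  fun t => if t ≤ m - 1 then f t else (m - t) * f t

/-- The Skorokhod `J1` metric on `D([0,∞),ℝ)`:
`d_{J1}(f,g) = Σ_{m=1}^∞ 2^{−m} (1 ∧ d_{J1,m}(f|_m, g|_m))`. -/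
noncomputable def dJ1 (f g : ℝ → ℝ) : ℝ :=
  ∑' m : ℕ, (2:ℝ)⁻¹ ^ (m + 1) *
    min 1 (dJ1T ((m:ℝ) + 1) (restrictD ((m:ℝ) + 1) f) (restrictD ((m:ℝ) + 1) g))

/-- The space `D([0,∞),ℝ)` of càdlàg paths. -/
def Dfun : Type := {f : ℝ → ℝ // IsCadlag f}

/-- The Skorokhod `J1` topology on `D([0,∞),ℝ)`, generated by the open balls of the
Skorokhod metric `dJ1`. -/
noncomputable def J1Top : TopologicalSpace Dfun :=
  TopologicalSpace.generateFrom
    {s : Set Dfun | ∃ f : Dfun, ∃ ε : ℝ, 0 < ε ∧ s = {g : Dfun | dJ1 f.1 g.1 < ε}}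

/-- The Borel σ-algebra of the Skorokhod `J1` topology on `D([0,∞),ℝ)`. -/
noncomputable def J1Borel : MeasurableSpace Dfun := @borel Dfun J1Top

open scoped ENNReal

def rightGrid (n : ℕ) (t : ℝ) : ℝ := (⌊t * (n + 1)⌋₊ + 1) / (n + 1)

lemma max_lt_rightGrid (n : ℕ) (t : ℝ) : max t 0 < rightGrid n t := by
  rw [rightGrid, lt_div_iff₀ (by positivity)]
  rcases le_total t 0 with ht | ht
  · simp [max_eq_right ht, Nat.floor_eq_zero.2 (by nlinarith : t * (n + 1) < 1)]
  · rw [max_eq_left ht]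
    exact Nat.lt_floor_add_one _

lemma rightGrid_le (n : ℕ) (t : ℝ) : rightGrid n t ≤ max t 0 + 1 / (n + 1) := by
  rw [rightGrid, add_div]
  gcongr
  rw [div_le_iff₀ (by positivity)]
  rcases le_total t 0 with ht | ht
  · simp [max_eq_right ht, Nat.floor_eq_zero.2 (by nlinarith : t * (n + 1) < 1)]
  · rw [max_eq_left ht]
    exact Nat.floor_le (by positivity)

lemma tendsto_rightGrid (t : ℝ) :
    Tendsto (fun n => rightGrid n t) atTop (𝓝[≥] (max t 0)) := by
  refine tendsto_nhdsWithin_of_tendsto_nhds_of_eventually_within _ ?_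
    (.of_forall fun n => (max_lt_rightGrid n t).le)
  have hupper := tendsto_const_nhds (x := max t 0) |>.add tendsto_one_div_add_atTop_nhds_zero_nat
  rw [add_zero] at hupper
  exact tendsto_of_tendsto_of_tendsto_of_le_of_le tendsto_const_nhds hupper
    (fun n => (max_lt_rightGrid n t).le) (rightGrid_le · t)

theorem measurable_uncurry_max_of_continuousWithinAt {X : Type*} [MeasurableSpace X]
    {F : X → ℝ → ℝ} (hmeas : ∀ q, 0 ≤ q → Measurable fun x => F x q)
    (hright : ∀ x t, 0 ≤ t → ContinuousWithinAt (F x) (Ici t) t) :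
    Measurable fun p : X × ℝ => F p.1 (max p.2 0) := by
  refine measurable_of_tendsto_metrizable' atTop
    (f := fun n p => F p.1 (rightGrid n p.2)) (fun n => ?_)
    (tendsto_pi_nhds.2 fun p => ?_)
  · have hgrid : Measurable fun q : X × ℕ => F q.1 (((q.2 : ℝ) + 1) / ((n : ℝ) + 1)) :=
      measurable_from_prod_countable_left fun j =>
        hmeas (((j : ℝ) + 1) / ((n : ℝ) + 1)) (by positivity)
    exact hgrid.comp (measurable_fst.prodMk (measurable_snd.mul_const _).nat_floor)
  · exact (hright p.1 _ (le_max_right _ _)).tendsto.comp (tendsto_rightGrid p.2)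

namespace IsCadlag

variable {f : ℝ → ℝ}

theorem measurable_comp_max (hf : IsCadlag f) : Measurable fun t => f (max t 0) :=
  (measurable_uncurry_max_of_continuousWithinAt (X := Unit) (F := fun _ => f)
    (fun _ _ => measurable_const) (fun _ t ht => hf.1 t ht)).comp
    (measurable_const.prodMk measurable_id : Measurable fun t : ℝ => ((), t))

theorem aestronglyMeasurable_restrict (hf : IsCadlag f) {s : Set ℝ} (hs : MeasurableSet s)
    (hs0 : s ⊆ Ici 0) : AEStronglyMeasurable f (volume.restrict s) :=
  hf.measurable_comp_max.aestronglyMeasurable.congr <|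
    (ae_restrict_mem hs).mono fun t ht => by simp [max_eq_left (mem_Ici.1 (hs0 ht))]

end IsCadlag

/-- For `x ≤ y`, `Ioc x y` misses `P` exactly when `x` and `y` lie in the same piece of the
partition of `[0, b)` cut at the points of `P`. -/
def IsOscillationPartition (f : ℝ → ℝ) (ε b : ℝ) (P : Finset ℝ) : Prop :=
  ∀ x y, 0 ≤ x → x ≤ y → y < b → Disjoint (P : Set ℝ) (Ioc x y) → |f y - f x| ≤ ε

namespace IsOscillationPartition

variable {f : ℝ → ℝ} {ε b : ℝ} {P : Finset ℝ}

lemma of_nonpos (hb : b ≤ 0) : IsOscillationPartition f ε b P :=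
  fun _ _ hx hxy hy _ => absurd hy (by linarith)

lemma insert {c L : ℝ} (hP : IsOscillationPartition f ε b P)
    (hL : ∀ x ∈ Ico b c, |f x - L| ≤ ε / 2) : IsOscillationPartition f ε c (insert b P) := by
  intro x y hx hxy hyc hdisj
  rw [Finset.coe_insert] at hdisj
  by_cases hyb : y < b
  · exact hP x y hx hxy hyb (hdisj.mono_left (subset_insert _ _))
  have hbx : b ≤ x := not_lt.1 fun hxb =>
    disjoint_left.1 hdisj (mem_insert b _) ⟨hxb, not_lt.1 hyb⟩
  have htriangle := abs_sub_le (f y) L (f x)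
  rw [abs_sub_comm L] at htriangle
  linarith [hL y ⟨not_lt.1 hyb, hyc⟩, hL x ⟨hbx, hxy.trans_lt hyc⟩]

/-- `x` and `y` lie in the same piece. -/
lemma abs_sub_le_of_close {δ x y : ℝ} (hP : IsOscillationPartition f ε b P)
    (hx : x ∈ Ico 0 b) (hy : y ∈ Ico 0 b) (hxy : |y - x| ≤ δ)
    (hxP : ∀ p ∈ P, x ∉ Icc (p - δ) (p + δ)) : |f y - f x| ≤ ε := by
  obtain ⟨hxy₁, hxy₂⟩ := abs_le.1 hxy
  rcases le_total x y with h | h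
  · refine hP x y hx.1 h hy.2 (disjoint_left.2 fun p hp hpI => hxP p hp ⟨?_, ?_⟩) <;>
      linarith [hpI.1, hpI.2]
  · rw [abs_sub_comm]
    refine hP y x hy.1 h hx.2 (disjoint_left.2 fun p hp hpI => hxP p hp ⟨?_, ?_⟩) <;>
      linarith [hpI.1, hpI.2]

end IsOscillationPartition

namespace IsCadlag

variable {f : ℝ → ℝ}

/-- The set of `c ≤ b` admitting a partition contains its supremum thanks to the left limit
there, and the supremum is `b` thanks to right continuity. -/
theorem exists_isOscillationPartition (hf : IsCadlag f) {ε : ℝ} (hε : 0 < ε) (b : ℝ) :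
    ∃ P, IsOscillationPartition f ε b P := by
  rcases le_or_gt b 0 with hb | hb
  · exact ⟨∅, .of_nonpos hb⟩
  set S := {c ∈ Icc 0 b | ∃ P, IsOscillationPartition f ε c P}
  have h0 : 0 ∈ S := ⟨⟨le_rfl, hb.le⟩, ∅, .of_nonpos le_rfl⟩
  have hbdd : BddAbove S := ⟨b, fun c hc => hc.1.2⟩
  have hc0 : 0 ≤ sSup S := le_csSup hbdd h0
  have hcb : sSup S ≤ b := csSup_le ⟨0, h0⟩ fun c hc => hc.1.2
  have hcS : sSup S ∈ S := by
    rcases hc0.eq_or_lt with hc | hc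
    · rwa [← hc]
    obtain ⟨L, hL⟩ := hf.2 _ hc
    obtain ⟨l, hl, hlL⟩ := mem_nhdsLT_iff_exists_Ioo_subset.1
      (hL.eventually (Metric.closedBall_mem_nhds L (half_pos hε)))
    obtain ⟨c, ⟨-, P, hP⟩, hlc⟩ := exists_lt_of_lt_csSup ⟨0, h0⟩ hl
    exact ⟨⟨hc0, hcb⟩, _, hP.insert fun x hx => hlL ⟨hlc.trans_le hx.1, hx.2⟩⟩
  obtain ⟨-, P, hP⟩ := hcS
  rcases hcb.eq_or_lt with hcb | hcb
  · exact ⟨P, hcb ▸ hP⟩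
  obtain ⟨w, hw, hwf⟩ := mem_nhdsGE_iff_exists_Ico_subset.1
    ((hf.1 _ hc0).eventually (Metric.closedBall_mem_nhds _ (half_pos hε)))
  have hmin : min b w ∈ S := ⟨⟨hc0.trans (le_min hcb.le hw.le), min_le_left _ _⟩, _,
    hP.insert fun x hx => hwf ⟨hx.1, hx.2.trans_le (min_le_right _ _)⟩⟩
  exact absurd (le_csSup hbdd hmin) (not_le.2 (lt_min hcb hw))

theorem exists_bound (hf : IsCadlag f) (b : ℝ) : ∃ M, 0 ≤ M ∧ ∀ x ∈ Icc 0 b, |f x| ≤ M := by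
  classical
  obtain ⟨P, hP⟩ := hf.exists_isOscillationPartition one_pos (b + 1)
  set Q := insert 0 P
  refine ⟨∑ p ∈ Q, |f p| + 1, by positivity, fun x hx => ?_⟩
  -- the last breakpoint (or `0`) to the left of `x`
  set R := Q.filter fun p => 0 ≤ p ∧ p ≤ x
  have hR : R.Nonempty := ⟨0, Finset.mem_filter.2 ⟨Finset.mem_insert_self _ _, le_rfl, hx.1⟩⟩
  obtain ⟨hpQ, hp0, hpx⟩ := Finset.mem_filter.1 (R.max'_mem hR)
  have hdisj : Disjoint (P : Set ℝ) (Ioc (R.max' hR) x) := disjoint_left.2 fun p hp hpI =>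
    not_le.2 hpI.1 (R.le_max' p (Finset.mem_filter.2
      ⟨Finset.mem_insert_of_mem hp, hp0.trans hpI.1.le, hpI.2⟩))
  have hosc := hP _ x hp0 hpx (by linarith [hx.2]) hdisj
  linarith [Finset.single_le_sum (fun p _ => abs_nonneg (f p)) hpQ,
    abs_sub_abs_le_abs_sub (f x) (f (R.max' hR))]

theorem intervalIntegrable (hf : IsCadlag f) {a b : ℝ} (ha : 0 ≤ a) (hb : 0 ≤ b) :
    IntervalIntegrable f volume a b := by
  obtain ⟨M, -, hM⟩ := hf.exists_bound (max a b)
  have hsub : uIoc a b ⊆ Icc 0 (max a b) := fun t ht =>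
    ⟨(le_min ha hb).trans (le_of_lt ht.1), ht.2⟩
  rw [intervalIntegrable_iff]
  refine Integrable.mono' (integrableOn_const (C := M) measure_Ioc_lt_top.ne)
    (hf.aestronglyMeasurable_restrict measurableSet_uIoc fun t ht => (hsub ht).1) ?_
  exact (ae_restrict_mem measurableSet_uIoc).mono fun t ht => hM t (hsub ht)

theorem tendsto_slope_integral (hf : IsCadlag f) {q : ℝ} (hq : 0 ≤ q) :
    Tendsto (fun u => (u - q)⁻¹ * ∫ t in q..u, f t) (𝓝[>] q) (𝓝 (f q)) := by
  have hderiv : HasDerivWithinAt (fun u => ∫ t in q..u, f t) (f q) (Ici q) q :=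
    intervalIntegral.integral_hasDerivWithinAt_right (hf.intervalIntegrable hq hq)
      ⟨Ioi q, self_mem_nhdsWithin,
        hf.aestronglyMeasurable_restrict measurableSet_Ioi fun t ht => hq.trans (le_of_lt ht)⟩
      (ContinuousWithinAt.mono (hf.1 q hq) Ioi_subset_Ici_self)
  have hslope := (hasDerivWithinAt_iff_tendsto_slope' self_notMem_Ioi).1
    (hderiv.mono Ioi_subset_Ici_self)
  exact hslope.congr fun u => by simp [slope_def_field, div_eq_inv_mul]

end IsCadlag

theorem abs_integral_le_of_abs_le_add_indicator {u : ℝ → ℝ} {a b c₀ c : ℝ} {E : Set ℝ}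
    (hab : a ≤ b) (hE : MeasurableSet E) (hEfin : volume E ≠ ∞) (hc : 0 ≤ c)
    (hu : ∀ t ∈ Icc a b, |u t| ≤ c₀ + E.indicator (fun _ => c) t) :
    |∫ t in a..b, u t| ≤ c₀ * (b - a) + c * volume.real E := by
  have hind : Integrable (E.indicator fun _ => c) :=
    (integrable_indicator_iff hE).2 (integrableOn_const hEfin)
  calc |∫ t in a..b, u t|
      ≤ ∫ t in a..b, (c₀ + E.indicator (fun _ => c) t) := by
        rw [← Real.norm_eq_abs]
        exact intervalIntegral.norm_integral_le_of_norm_le hab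
            (.of_forall fun t ht => hu t (Ioc_subset_Icc_self ht))
            (intervalIntegrable_const.add hind.intervalIntegrable)
    _ = c₀ * (b - a) + ∫ t in Ioc a b, E.indicator (fun _ => c) t := by
        rw [intervalIntegral.integral_add intervalIntegrable_const hind.intervalIntegrable,
          intervalIntegral.integral_const, intervalIntegral.integral_of_le hab, smul_eq_mul,
          mul_comm (b - a)]
    _ ≤ c₀ * (b - a) + ∫ t, E.indicator (fun _ => c) t :=
        add_le_add_right (setIntegral_le_integral hind
          (.of_forall (indicator_nonneg fun _ _ => hc))) _
    _ = c₀ * (b - a) + c * volume.real E := by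
        rw [integral_indicator_const _ hE, smul_eq_mul, mul_comm (volume.real E)]

namespace IsCadlag

variable {f : ℝ → ℝ}

/-- Away from the `δ`-neighbourhoods of the breakpoints of an oscillation partition, a time
change moving points by at most `δ` keeps them in their piece; the neighbourhoods have total
length `2δ · #P`. -/
theorem exists_abs_integral_sub_le (hf : IsCadlag f) {s h η : ℝ} (hs : 0 ≤ s) (hh : 0 ≤ h)
    (hη : 0 < η) :
    ∃ δ, 0 < δ ∧ δ < 1 ∧ ∀ g γ : ℝ → ℝ, IntervalIntegrable g volume s (s + h) →
      (∀ t ∈ Icc s (s + h), 0 ≤ γ t ∧ |γ t - t| ≤ δ ∧ |f (γ t) - g t| ≤ δ) →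
      |(∫ t in s..s + h, g t) - ∫ t in s..s + h, f t| ≤ η := by
  obtain ⟨M, hM0, hM⟩ := hf.exists_bound (s + h + 1)
  set ε := η / (2 * (h + 1))
  have hε0 : 0 < ε := by positivity
  have hε : ε * (2 * (h + 1)) = η := div_mul_cancel₀ _ (by positivity)
  obtain ⟨P, hP⟩ := hf.exists_isOscillationPartition hε0 (s + h + 1)
  set δ := min (1 / 2) (η / (2 * (h + 4 * M * P.card + 1)))
  have hδ0 : 0 < δ := lt_min (by norm_num) (by positivity)
  have hδ : δ * (2 * (h + 4 * M * P.card + 1)) ≤ η :=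
    (le_div_iff₀ (by positivity)).1 (min_le_right _ _)
  refine ⟨δ, hδ0, (min_le_left _ _).trans_lt (by norm_num), fun g γ hg hγ => ?_⟩
  set E := ⋃ p ∈ P, Icc (p - δ) (p + δ)
  have hE : MeasurableSet E := Finset.measurableSet_biUnion _ fun _ _ => measurableSet_Icc
  have hEfin : volume E ≠ ∞ :=
    (measure_biUnion_lt_top P.finite_toSet fun _ _ => measure_Icc_lt_top).ne
  have hEvol : volume.real E ≤ P.card * (2 * δ) := by
    refine (measureReal_biUnion_finset_le P _).trans (le_of_eq ?_)
    rw [Finset.sum_congr rfl fun p _ => Real.volume_real_Icc_of_le (by linarith : p - δ ≤ p + δ),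
      Finset.sum_congr rfl fun p _ => (by ring : p + δ - (p - δ) = 2 * δ),
      Finset.sum_const, nsmul_eq_mul]
  have hpointwise (t : ℝ) (ht : t ∈ Icc s (s + h)) :
      |g t - f t| ≤ (δ + ε) + E.indicator (fun _ => 2 * M) t := by
    obtain ⟨hγ0, hγt, hfg⟩ := hγ t ht
    have hδ2 : δ ≤ 1 / 2 := min_le_left _ _
    have hγt' := (abs_le.1 hγt).2
    have htriangle := abs_sub_le (g t) (f (γ t)) (f t)
    rw [abs_sub_comm (g t) (f (γ t))] at htriangle
    by_cases htE : t ∈ E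
    · rw [indicator_of_mem htE]
      linarith [abs_sub (f (γ t)) (f t), hM (γ t) ⟨hγ0, by linarith [ht.2]⟩,
        hM t ⟨hs.trans ht.1, by linarith [ht.2]⟩]
    · rw [indicator_of_notMem htE]
      have hosc := hP.abs_sub_le_of_close ⟨hs.trans ht.1, by linarith [ht.2]⟩
        ⟨hγ0, by linarith [ht.2]⟩ hγt fun p hp hpt => htE (mem_biUnion hp hpt)
      linarith
  calc |(∫ t in s..s + h, g t) - ∫ t in s..s + h, f t|
      = |∫ t in s..s + h, (g t - f t)| := by
        rw [intervalIntegral.integral_sub hg (hf.intervalIntegrable hs (by linarith))]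
    _ ≤ (δ + ε) * (s + h - s) + 2 * M * volume.real E :=
        abs_integral_le_of_abs_le_add_indicator (by linarith) hE hEfin (by positivity)
          hpointwise
    _ ≤ (δ + ε) * h + 2 * M * (P.card * (2 * δ)) := by
        rw [add_sub_cancel_left]
        gcongr
    _ ≤ η := by nlinarith

end IsCadlag

lemma dJ1T_nonneg (T : ℝ) (f g : ℝ → ℝ) : 0 ≤ dJ1T T f g :=
  Real.sInf_nonneg fun _ hr => hr.1

lemma dJ1T_self (T : ℝ) (f : ℝ → ℝ) : dJ1T T f f = 0 :=
  le_antisymm (csInf_le ⟨0, fun _ hr => hr.1⟩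
      ⟨le_rfl, id, ⟨continuousOn_id, strictMonoOn_id, rfl, rfl⟩, by simp, by simp⟩)
    (dJ1T_nonneg T f f)

lemma dJ1_self (f : ℝ → ℝ) : dJ1 f f = 0 := by
  simp [dJ1, dJ1T_self]

lemma summand_le_dJ1 (f g : ℝ → ℝ) (m : ℕ) :
    (2 : ℝ)⁻¹ ^ (m + 1) *
      min 1 (dJ1T ((m : ℝ) + 1) (restrictD ((m : ℝ) + 1) f) (restrictD ((m : ℝ) + 1) g)) ≤
      dJ1 f g := by
  have hnonneg (n : ℕ) : 0 ≤ (2 : ℝ)⁻¹ ^ (n + 1) *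
      min 1 (dJ1T ((n : ℝ) + 1) (restrictD ((n : ℝ) + 1) f) (restrictD ((n : ℝ) + 1) g)) :=
    mul_nonneg (by positivity) (le_min zero_le_one (dJ1T_nonneg _ _ _))
  have hsummable : Summable fun n : ℕ => (2 : ℝ)⁻¹ ^ (n + 1) :=
    (summable_geometric_two.mul_left 2⁻¹).congr fun n => by rw [pow_succ', one_div, inv_pow]
  exact (hsummable.of_nonneg_of_le hnonneg fun n =>
    mul_le_of_le_one_right (by positivity) (min_le_left _ _)).le_tsum m fun n _ => hnonneg n

lemma abs_restrictD_le {T x : ℝ} (f : ℝ → ℝ) (hx : x ≤ T) : |restrictD T f x| ≤ |f x| := by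
  unfold restrictD
  split_ifs with h
  · exact le_rfl
  · rw [abs_mul, abs_of_nonneg (by linarith)]
    exact mul_le_of_le_one_left (abs_nonneg _) (by linarith)

/-- On `[0, k - 1]` the damping in `restrictD (k + 1)` has no effect, even after the time change. -/
theorem exists_timeChange_of_dJ1_lt {f g : ℝ → ℝ} (hf : IsCadlag f) (hg : IsCadlag g) (k : ℕ)
    {δ : ℝ} (hδ1 : δ ≤ 1) (hfg : dJ1 f g < (2 : ℝ)⁻¹ ^ (k + 1) * δ) :
    ∃ γ : ℝ → ℝ, ∀ t ∈ Icc 0 ((k : ℝ) - 1),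
      0 ≤ γ t ∧ |γ t - t| ≤ δ ∧ |f (γ t) - g t| ≤ δ := by
  set T : ℝ := k + 1
  obtain ⟨Mf, hMf0, hMf⟩ := hf.exists_bound T
  obtain ⟨Mg, hMg0, hMg⟩ := hg.exists_bound T
  have hnonempty : Mf + Mg ∈ {r : ℝ | 0 ≤ r ∧ ∃ γ : ℝ → ℝ, IsTimeChange T γ ∧
      (∀ t ∈ Icc (0:ℝ) T, |γ t - t| ≤ r) ∧
      (∀ t ∈ Icc (0:ℝ) T, |restrictD T f (γ t) - restrictD T g t| ≤ r)} := by
    refine ⟨by positivity, id, ⟨continuousOn_id, strictMonoOn_id, rfl, rfl⟩,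
      fun t _ => by simpa using by positivity, fun t ht => ?_⟩
    rw [id]
    linarith [abs_sub (restrictD T f t) (restrictD T g t), abs_restrictD_le f ht.2,
      abs_restrictD_le g ht.2, hMf t ht, hMg t ht]
  have hmin : min 1 (dJ1T T (restrictD T f) (restrictD T g)) < δ :=
    lt_of_mul_lt_mul_left ((summand_le_dJ1 f g k).trans_lt hfg) (by positivity)
  have hdist : dJ1T T (restrictD T f) (restrictD T g) < δ := by
    contrapose! hmin
    exact le_min hδ1 hmin
  obtain ⟨r, ⟨-, γ, ⟨-, hmono, hγ0, -⟩, hγ, hγfg⟩, hrδ⟩ :=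
    exists_lt_of_csInf_lt ⟨_, hnonempty⟩ hdist
  refine ⟨γ, fun t ht => ?_⟩
  have htT : t ∈ Icc 0 T := ⟨ht.1, by linarith [ht.2]⟩
  have hγt := (hγ t htT).trans hrδ.le
  have hfg := (hγfg t htT).trans hrδ.le
  rw [restrictD, if_pos (by linarith [(abs_le.1 hγt).2, ht.2]), restrictD,
    if_pos (by linarith [ht.2])] at hfg
  exact ⟨hγ0 ▸ hmono.monotoneOn ⟨le_rfl, by positivity⟩ htT ht.1, hγt, hfg⟩

namespace Dfun

lemma isOpen_dJ1_ball (f : Dfun) {ε : ℝ} (hε : 0 < ε) :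
    IsOpen[J1Top] {g : Dfun | dJ1 f.1 g.1 < ε} :=
  TopologicalSpace.isOpen_generateFrom_of_mem ⟨f, ε, hε, rfl⟩

theorem continuous_intervalIntegral {s h : ℝ} (hs : 0 ≤ s) (hh : 0 ≤ h) :
    Continuous[J1Top, _] fun f : Dfun => ∫ t in s..s + h, f.1 t := by
  let := J1Top
  refine continuous_iff_continuousAt.2 fun f => Metric.tendsto_nhds.2 fun η hη => ?_
  obtain ⟨δ, hδ0, hδ1, hδ⟩ := f.2.exists_abs_integral_sub_le hs hh (half_pos hη)
  set k := ⌈s + h⌉₊ + 1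
  have hball : {g : Dfun | dJ1 f.1 g.1 < (2 : ℝ)⁻¹ ^ (k + 1) * δ} ∈ 𝓝 f :=
    (isOpen_dJ1_ball f (by positivity)).mem_nhds (by simp [dJ1_self, hδ0])
  filter_upwards [hball] with g hg
  obtain ⟨γ, hγ⟩ := exists_timeChange_of_dJ1_lt f.2 g.2 k hδ1.le hg
  have hwindow : Icc s (s + h) ⊆ Icc 0 ((k : ℝ) - 1) := fun t ht =>
    ⟨hs.trans ht.1, by simpa [k] using ht.2.trans (Nat.le_ceil _)⟩
  rw [Real.dist_eq]
  exact (hδ g.1 γ (g.2.intervalIntegrable hs (by linarith)) fun t ht => hγ t (hwindow ht)).trans_lt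
    (half_lt_self hη)

theorem measurable_eval {q : ℝ} (hq : 0 ≤ q) : Measurable[J1Borel] fun f : Dfun => f.1 q := by
  let := J1Top
  let := J1Borel
  have : BorelSpace Dfun := ⟨rfl⟩
  have hu : Tendsto (fun n : ℕ => q + 1 / ((n : ℝ) + 1)) atTop (𝓝[>] q) := by
    refine tendsto_nhdsWithin_of_tendsto_nhds_of_eventually_within _ ?_
      (.of_forall fun n => lt_add_of_pos_right q (by positivity))
    simpa using tendsto_const_nhds (x := q) |>.add tendsto_one_div_add_atTop_nhds_zero_nat
  have havg (n : ℕ) : Continuous fun f : Dfun =>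
      (q + 1 / ((n : ℝ) + 1) - q)⁻¹ * ∫ t in q..q + 1 / ((n : ℝ) + 1), f.1 t :=
    continuous_const.mul (continuous_intervalIntegral hq (by positivity))
  exact measurable_of_tendsto_metrizable' atTop (fun n => (havg n).measurable)
    (tendsto_pi_nhds.2 fun f => (f.2.tendsto_slope_integral hq).comp hu)

theorem measurable_eval_max :
    Measurable[@Prod.instMeasurableSpace _ _ J1Borel _] fun p : Dfun × ℝ => p.1.1 (max p.2 0) :=
  @measurable_uncurry_max_of_continuousWithinAt _ J1Borel (fun f => f.1)
    (fun _ hq => measurable_eval hq) fun f t ht => f.2.1 t ht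

end Dfun

/-- `eq:timeintunnel_measurable`. For every Borel set `B ⊆ ℝ`, the map
`f ↦ λ(t ∈ [0,∞) : f(t) ∈ B)` from `D([0,∞),ℝ)` to `[0,∞]` is measurable for the Borel
σ-algebra of the Skorokhod `J1` topology. -/
theorem occupation_measurable (B : Set ℝ) (hB : MeasurableSet B) :
    @Measurable Dfun ENNReal J1Borel inferInstance
      (fun f => volume {t : ℝ | 0 ≤ t ∧ f.1 t ∈ B}) := by
  let := J1Borel
  have hset : {p : Dfun × ℝ | 0 ≤ p.2 ∧ p.1.1 p.2 ∈ B} =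
      {p | 0 ≤ p.2} ∩ (fun p : Dfun × ℝ => p.1.1 (max p.2 0)) ⁻¹' B := by
    ext ⟨f, t⟩
    show 0 ≤ t ∧ f.1 t ∈ B ↔ 0 ≤ t ∧ f.1 (max t 0) ∈ B
    exact and_congr_right fun ht => by rw [max_eq_left ht]
  have hmeas : MeasurableSet {p : Dfun × ℝ | 0 ≤ p.2 ∧ p.1.1 p.2 ∈ B} :=
    hset ▸ (measurable_snd measurableSet_Ici).inter (Dfun.measurable_eval_max hB)
  exact measurable_measure_prodMk_left hmeas
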